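/- Fix a with -1 ≤ a < 1 and λ ∈ ℝ, λ ≠ 0. Let 𝔤 be the 3-dimensional Lie algebra with orthonormal basis {x₁,x₂,x₃} and brackets [x₁,x₂] = x₂ + λ(a-1) x₃, [x₁,x₃] = a x₃. If the Ricci operator of this inner product lies in ℝ·id ⊕ D where D is the set of matrices [[x₁₁,0,0],[x₂₁,x₂₂,0],[x₃₁, λ(x₃₃-x₂₂), x₃₃]], then we reach a contradiction; i.e., Ric does not lie in this set when λ ≠ 0. -/
import Mathlib


open Matrix

noncomputable section

/-- standard basis of ℝ³ -/
def e (i : Fin 3) : Fin 3 → ℝ := Pi.single i 1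

/-- standard inner product on ℝ³ (the basis `e` is orthonormal) -/
def dotp (x y : Fin 3 → ℝ) : ℝ := ∑ i, x i * y i

/-- Levi-Civita connection of the metric Lie algebra (ℝ³, br, dotp), via
    2⟨∇_X Y, Z⟩ = ⟨[Z,X],Y⟩ + ⟨X,[Z,Y]⟩ + ⟨[X,Y],Z⟩. -/
def nabla (br : (Fin 3 → ℝ) → (Fin 3 → ℝ) → (Fin 3 → ℝ)) (X Y : Fin 3 → ℝ) :
    Fin 3 → ℝ :=
  fun k => (1/2) * (dotp (br (e k) X) Y + dotp X (br (e k) Y) + dotp (br X Y) (e k))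

/-- Riemannian curvature R(X,Y)Z = ∇_X∇_Y Z - ∇_Y∇_X Z - ∇_{[X,Y]}Z. -/
def curv (br : (Fin 3 → ℝ) → (Fin 3 → ℝ) → (Fin 3 → ℝ)) (X Y Z : Fin 3 → ℝ) :
    Fin 3 → ℝ :=
  nabla br X (nabla br Y Z) - nabla br Y (nabla br X Z) - nabla br (br X Y) Z

/-- Ricci operator Ric(X) = Σᵢ R(X,eᵢ)eᵢ. -/
def ric (br : (Fin 3 → ℝ) → (Fin 3 → ℝ) → (Fin 3 → ℝ)) (X : Fin 3 → ℝ) :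
    Fin 3 → ℝ :=
  ∑ i, curv br X (e i) (e i)

/-- The bracket with [x₁,x₂] = x₂ + λ(a-1) x₃, [x₁,x₃] = a x₃, [x₂,x₃] = 0. -/
def br9 (a l : ℝ) (x y : Fin 3 → ℝ) : Fin 3 → ℝ :=
  ![0,
    x 0 * y 1 - x 1 * y 0,
    l * (a - 1) * (x 0 * y 1 - x 1 * y 0) + a * (x 0 * y 2 - x 2 * y 0)]

set_option maxHeartbeats 1000000

/-- For λ ≠ 0 the Ricci operator does not lie in the matrix expression of
    ℝ·id ⊕ Der(𝔤) in the basis {x₁,x₂,x₃}. -/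
theorem r3a_nonsoliton_direction (a l : ℝ) (ha₁ : -1 ≤ a) (ha₂ : a < 1)
    (hl : l ≠ 0) :
    ¬ ∃ x11 x21 x22 x31 x33 : ℝ,
      ∀ i : Fin 3, ric (br9 a l) (e i) =
        Matrix.mulVec !![x11,0,0; x21,x22,0; x31, l * (x33 - x22), x33] (e i) := by
  rintro ⟨x11, x21, x22, x31, x33, h⟩
  have h21 := congrFun (h 2) 1
  have h12 := congrFun (h 1) 2
  have h11 := congrFun (h 1) 1
  have h22 := congrFun (h 2) 2
  simp [ric, curv, nabla, br9, dotp, e, Fin.sum_univ_three, Pi.single, Function.update,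
    Matrix.mulVec, dotProduct] at h21 h12 h11 h22
  have ha : a = 0 := by
    have h0 : l * (a * (a - 1)) = 0 := by linear_combination -h21
    have h1 := (mul_eq_zero.mp h0).resolve_left hl
    rcases mul_eq_zero.mp h1 with h' | h'
    · exact h'
    · linarith
  subst ha
  have hx : x33 = x22 := by
    have h0 : l * (x33 - x22) = 0 := by linear_combination -h12
    have h1 := (mul_eq_zero.mp h0).resolve_left hl
    linarith
  nlinarith [sq_nonneg l, h11, h22, hx]
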